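/- On {0 < u₂ < κ < u₁} with canonical Poisson bracket in (u₁,u₂,p_{u₁},p_{u₂}), define the Kepler Hamiltonian 2H = I₁ = [(u₁²−κ²)(p_{u₁}² + αu₁/(u₁²−κ²))]/(u₁²−u₂²) + [(u₂²−κ²)(p_{u₂}² + αu₂/(u₂²−κ²))]/(u₂²−u₁²). Then H Poisson-commutes with the additional first integral C = (u₁²−κ²)(u₂²−κ²)(p_{u₁}−p_{u₂})²/(u₁−u₂)². -/

import Mathlib

/-- Canonical Poisson bracket on phase space ℝ⁴ with coordinates
(u₁, u₂, p₁, p₂):  {F,G} = Σᵢ (∂F/∂uᵢ ∂G/∂pᵢ − ∂F/∂pᵢ ∂G/∂uᵢ). -/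
noncomputable def pb (F G : ℝ × ℝ × ℝ × ℝ → ℝ) (z : ℝ × ℝ × ℝ × ℝ) : ℝ :=
  fderiv ℝ F z (1, 0, 0, 0) * fderiv ℝ G z (0, 0, 1, 0)
  - fderiv ℝ F z (0, 0, 1, 0) * fderiv ℝ G z (1, 0, 0, 0)
  + fderiv ℝ F z (0, 1, 0, 0) * fderiv ℝ G z (0, 0, 0, 1)
  - fderiv ℝ F z (0, 0, 0, 1) * fderiv ℝ G z (0, 1, 0, 0)

/-!
Both `H` and `C` are invariant under exchanging the two degrees of freedom
`(u₁, p₁) ↔ (u₂, p₂)`, so `{H, C}(z) = J(z) + J(σ z)`, where `σ` is the exchange and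
`J = ∂H/∂u₁ ∂C/∂p₁ - ∂H/∂p₁ ∂C/∂u₁` is the bracket in the first degree of freedom alone.
Computing the four partial derivatives explicitly, `J(σ z) = -J(z)` is a rational identity.
-/

noncomputable section

def keplerHamiltonian (α κ : ℝ) (z : ℝ × ℝ × ℝ × ℝ) : ℝ :=
  ((z.1 ^ 2 - κ ^ 2) * (z.2.2.1 ^ 2 + α * z.1 / (z.1 ^ 2 - κ ^ 2))) / (z.1 ^ 2 - z.2.1 ^ 2) / 2
    + ((z.2.1 ^ 2 - κ ^ 2) * (z.2.2.2 ^ 2 + α * z.2.1 / (z.2.1 ^ 2 - κ ^ 2)))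
      / (z.2.1 ^ 2 - z.1 ^ 2) / 2

def eulerIntegral (κ : ℝ) (z : ℝ × ℝ × ℝ × ℝ) : ℝ :=
  (z.1 ^ 2 - κ ^ 2) * (z.2.1 ^ 2 - κ ^ 2) * (z.2.2.1 - z.2.2.2) ^ 2 / (z.1 - z.2.1) ^ 2

def swapDOF : (ℝ × ℝ × ℝ × ℝ) ≃L[ℝ] ℝ × ℝ × ℝ × ℝ :=
  LinearEquiv.toContinuousLinearEquiv
    { toFun := fun z => (z.2.1, z.1, z.2.2.2, z.2.2.1)
      invFun := fun z => (z.2.1, z.1, z.2.2.2, z.2.2.1)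
      map_add' := fun _ _ => rfl
      map_smul' := fun _ _ => rfl
      left_inv := fun _ => rfl
      right_inv := fun _ => rfl }

def pb₁ (F G : ℝ × ℝ × ℝ × ℝ → ℝ) (z : ℝ × ℝ × ℝ × ℝ) : ℝ :=
  fderiv ℝ F z (1, 0, 0, 0) * fderiv ℝ G z (0, 0, 1, 0)
  - fderiv ℝ F z (0, 0, 1, 0) * fderiv ℝ G z (1, 0, 0, 0)

end

lemma swapDOF_apply (z : ℝ × ℝ × ℝ × ℝ) : swapDOF z = (z.2.1, z.1, z.2.2.2, z.2.2.1) := rfl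

section General

variable {E : Type*} [NormedAddCommGroup E] [NormedSpace ℝ E] {F : ℝ × ℝ × ℝ × ℝ → E}

lemma fderiv_apply_of_swapDOF_invariant (hF : ∀ z, F (swapDOF z) = F z)
    (z v : ℝ × ℝ × ℝ × ℝ) : fderiv ℝ F z v = fderiv ℝ F (swapDOF z) (swapDOF v) := by
  conv_lhs => rw [← show F ∘ swapDOF = F from funext hF, swapDOF.comp_right_fderiv]
  rfl

variable {u₁ u₂ p₁ p₂ : ℝ} {a : E}

lemma fderiv_apply_u₁ (hF : DifferentiableAt ℝ F (u₁, u₂, p₁, p₂))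
    (h : HasDerivAt (fun u => F (u, u₂, p₁, p₂)) a u₁) :
    fderiv ℝ F (u₁, u₂, p₁, p₂) (1, 0, 0, 0) = a :=
  (hF.hasFDerivAt.comp_hasDerivAt u₁ ((hasDerivAt_id u₁).prodMk (hasDerivAt_const _ _))).unique h

lemma fderiv_apply_p₁ (hF : DifferentiableAt ℝ F (u₁, u₂, p₁, p₂))
    (h : HasDerivAt (fun p => F (u₁, u₂, p, p₂)) a p₁) :
    fderiv ℝ F (u₁, u₂, p₁, p₂) (0, 0, 1, 0) = a :=
  (hF.hasFDerivAt.comp_hasDerivAt p₁ ((hasDerivAt_const _ _).prodMk ((hasDerivAt_const _ _).prodMk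
    ((hasDerivAt_id p₁).prodMk (hasDerivAt_const _ _))))).unique h

end General

lemma pb_eq_pb₁_add_pb₁_swapDOF {F G : ℝ × ℝ × ℝ × ℝ → ℝ} (hF : ∀ z, F (swapDOF z) = F z)
    (hG : ∀ z, G (swapDOF z) = G z) (z : ℝ × ℝ × ℝ × ℝ) :
    pb F G z = pb₁ F G z + pb₁ F G (swapDOF z) := by
  rw [pb, pb₁, pb₁, fderiv_apply_of_swapDOF_invariant hF z (0, 1, 0, 0),
    fderiv_apply_of_swapDOF_invariant hF z (0, 0, 0, 1),
    fderiv_apply_of_swapDOF_invariant hG z (0, 1, 0, 0),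
    fderiv_apply_of_swapDOF_invariant hG z (0, 0, 0, 1)]
  simp only [swapDOF_apply]
  ring

lemma HasDerivAt.fun_sq {f : ℝ → ℝ} {f' x : ℝ} (hf : HasDerivAt f f' x) :
    HasDerivAt (fun y => f y ^ 2) (2 * f x * f') x := by
  simpa using hf.fun_pow 2

section KeplerEuler

variable {α κ u₁ u₂ p₁ p₂ : ℝ}

lemma keplerHamiltonian_swapDOF (α κ : ℝ) (z : ℝ × ℝ × ℝ × ℝ) :
    keplerHamiltonian α κ (swapDOF z) = keplerHamiltonian α κ z :=
  add_comm _ _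

lemma eulerIntegral_swapDOF (κ : ℝ) (z : ℝ × ℝ × ℝ × ℝ) :
    eulerIntegral κ (swapDOF z) = eulerIntegral κ z := by
  rw [eulerIntegral, eulerIntegral, swapDOF_apply, mul_comm (z.2.1 ^ 2 - κ ^ 2),
    ← neg_sub z.2.2.1, ← neg_sub z.1, neg_sq, neg_sq]

lemma differentiableAt_keplerHamiltonian {z : ℝ × ℝ × ℝ × ℝ} (h₁ : z.1 ^ 2 - κ ^ 2 ≠ 0)
    (h₂ : z.2.1 ^ 2 - κ ^ 2 ≠ 0) (h₁₂ : z.1 ^ 2 - z.2.1 ^ 2 ≠ 0) :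
    DifferentiableAt ℝ (keplerHamiltonian α κ) z := by
  have h₂₁ : z.2.1 ^ 2 - z.1 ^ 2 ≠ 0 := by rwa [← neg_sub, neg_ne_zero]
  unfold keplerHamiltonian
  fun_prop (disch := assumption)

lemma differentiableAt_eulerIntegral {z : ℝ × ℝ × ℝ × ℝ} (h₁₂ : z.1 - z.2.1 ≠ 0) :
    DifferentiableAt ℝ (eulerIntegral κ) z := by
  have := pow_ne_zero 2 h₁₂
  unfold eulerIntegral
  fun_prop (disch := assumption)

lemma hasDerivAt_keplerHamiltonian_u₁ (h₁ : u₁ ^ 2 - κ ^ 2 ≠ 0) (h₁₂ : u₁ ^ 2 - u₂ ^ 2 ≠ 0) :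
    HasDerivAt (fun u => keplerHamiltonian α κ (u, u₂, p₁, p₂))
      (((2 * u₁ * p₁ ^ 2 + α) / 2 - 2 * u₁ * keplerHamiltonian α κ (u₁, u₂, p₁, p₂))
        / (u₁ ^ 2 - u₂ ^ 2)) u₁ := by
  have h₂₁ : u₂ ^ 2 - u₁ ^ 2 ≠ 0 := by rwa [← neg_sub, neg_ne_zero]
  have hsq := (hasDerivAt_id' u₁).fun_sq
  have hnum : HasDerivAt (fun u => (u ^ 2 - κ ^ 2) * (p₁ ^ 2 + α * u / (u ^ 2 - κ ^ 2)))
      (2 * u₁ * p₁ ^ 2 + α) u₁ :=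
    ((hsq.sub_const _).fun_mul ((((hasDerivAt_id' u₁).const_mul α).fun_div (hsq.sub_const _)
      h₁).const_add _)).congr_deriv (by field_simp; ring)
  simp only [keplerHamiltonian]
  refine (((hnum.fun_div (hsq.sub_const _) h₁₂).div_const 2).add
    (((hasDerivAt_const u₁ _).fun_div (hsq.const_sub _) h₂₁).div_const 2)).congr_deriv ?_
  field_simp
  ring

lemma hasDerivAt_keplerHamiltonian_p₁ :
    HasDerivAt (fun p => keplerHamiltonian α κ (u₁, u₂, p, p₂))
      ((u₁ ^ 2 - κ ^ 2) * p₁ / (u₁ ^ 2 - u₂ ^ 2)) p₁ := by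
  simp only [keplerHamiltonian]
  refine ((((((hasDerivAt_id' p₁).fun_sq.add_const _).const_mul _).div_const _).div_const
    2).add_const _).congr_deriv ?_
  ring

lemma hasDerivAt_eulerIntegral_u₁ (h₁₂ : u₁ - u₂ ≠ 0) :
    HasDerivAt (fun u => eulerIntegral κ (u, u₂, p₁, p₂))
      (2 * u₁ * (u₂ ^ 2 - κ ^ 2) * (p₁ - p₂) ^ 2 / (u₁ - u₂) ^ 2
        - 2 * eulerIntegral κ (u₁, u₂, p₁, p₂) / (u₁ - u₂)) u₁ := by
  simp only [eulerIntegral]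
  refine (((((hasDerivAt_id' u₁).fun_sq.sub_const _).mul_const _).mul_const _).fun_div
    ((hasDerivAt_id' u₁).sub_const u₂).fun_sq (pow_ne_zero 2 h₁₂)).congr_deriv ?_
  field_simp

lemma hasDerivAt_eulerIntegral_p₁ :
    HasDerivAt (fun p => eulerIntegral κ (u₁, u₂, p, p₂))
      (2 * (u₁ ^ 2 - κ ^ 2) * (u₂ ^ 2 - κ ^ 2) * (p₁ - p₂) / (u₁ - u₂) ^ 2) p₁ := by
  simp only [eulerIntegral]
  refine ((((hasDerivAt_id' p₁).sub_const p₂).fun_sq.const_mul _).div_const _).congr_deriv ?_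
  ring

lemma pb₁_keplerHamiltonian_eulerIntegral (h₁ : u₁ ^ 2 - κ ^ 2 ≠ 0) (h₂ : u₂ ^ 2 - κ ^ 2 ≠ 0)
    (h₁₂ : u₁ ^ 2 - u₂ ^ 2 ≠ 0) :
    pb₁ (keplerHamiltonian α κ) (eulerIntegral κ) (u₁, u₂, p₁, p₂) =
      ((2 * u₁ * p₁ ^ 2 + α) / 2 - 2 * u₁ * keplerHamiltonian α κ (u₁, u₂, p₁, p₂))
          / (u₁ ^ 2 - u₂ ^ 2)
        * (2 * (u₁ ^ 2 - κ ^ 2) * (u₂ ^ 2 - κ ^ 2) * (p₁ - p₂) / (u₁ - u₂) ^ 2)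
      - (u₁ ^ 2 - κ ^ 2) * p₁ / (u₁ ^ 2 - u₂ ^ 2)
        * (2 * u₁ * (u₂ ^ 2 - κ ^ 2) * (p₁ - p₂) ^ 2 / (u₁ - u₂) ^ 2
          - 2 * eulerIntegral κ (u₁, u₂, p₁, p₂) / (u₁ - u₂)) := by
  have hd : u₁ - u₂ ≠ 0 := fun h => h₁₂ (by rw [sub_eq_zero.1 h, sub_self])
  have hH := differentiableAt_keplerHamiltonian (α := α) (z := (u₁, u₂, p₁, p₂)) h₁ h₂ h₁₂
  have hC := differentiableAt_eulerIntegral (κ := κ) (z := (u₁, u₂, p₁, p₂)) hd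
  rw [pb₁, fderiv_apply_u₁ hH (hasDerivAt_keplerHamiltonian_u₁ h₁ h₁₂),
    fderiv_apply_p₁ hH hasDerivAt_keplerHamiltonian_p₁,
    fderiv_apply_u₁ hC (hasDerivAt_eulerIntegral_u₁ hd),
    fderiv_apply_p₁ hC hasDerivAt_eulerIntegral_p₁]

end KeplerEuler

theorem stmt_11_general (α κ : ℝ) :
    ∀ z : ℝ × ℝ × ℝ × ℝ, 0 < z.2.1 → z.2.1 < κ → κ < z.1 →
      pb (fun z => ((z.1 ^ 2 - κ ^ 2) * (z.2.2.1 ^ 2 + α * z.1 / (z.1 ^ 2 - κ ^ 2)))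
              / (z.1 ^ 2 - z.2.1 ^ 2) / 2
            + ((z.2.1 ^ 2 - κ ^ 2) * (z.2.2.2 ^ 2 + α * z.2.1 / (z.2.1 ^ 2 - κ ^ 2)))
              / (z.2.1 ^ 2 - z.1 ^ 2) / 2)
         (fun z => (z.1 ^ 2 - κ ^ 2) * (z.2.1 ^ 2 - κ ^ 2)
            * (z.2.2.1 - z.2.2.2) ^ 2 / (z.1 - z.2.1) ^ 2) z = 0 := by
  rintro ⟨u₁, u₂, p₁, p₂⟩ (hu₂ : 0 < u₂) (hu₂κ : u₂ < κ) (hκu₁ : κ < u₁)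
  change pb (keplerHamiltonian α κ) (eulerIntegral κ) (u₁, u₂, p₁, p₂) = 0
  have h₁ : u₁ ^ 2 - κ ^ 2 ≠ 0 := by nlinarith
  have h₂ : u₂ ^ 2 - κ ^ 2 ≠ 0 := by nlinarith
  have h₁₂ : u₁ ^ 2 - u₂ ^ 2 ≠ 0 := by nlinarith
  have h₂₁ : u₂ ^ 2 - u₁ ^ 2 ≠ 0 := by nlinarith
  rw [pb_eq_pb₁_add_pb₁_swapDOF (keplerHamiltonian_swapDOF α κ) (eulerIntegral_swapDOF κ),
    swapDOF_apply, pb₁_keplerHamiltonian_eulerIntegral h₁ h₂ h₁₂,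
    pb₁_keplerHamiltonian_eulerIntegral h₂ h₁ h₂₁]
  have hd : u₁ - u₂ ≠ 0 := by linarith
  have hd' : u₂ - u₁ ≠ 0 := by linarith
  simp only [keplerHamiltonian, eulerIntegral]
  field_simp
  ring

/-- The Kepler Hamiltonian in elliptic coordinates Poisson-commutes with
Euler's additional first integral C on {0 < u₂ < κ < u₁}. -/
theorem stmt_11 (α κ : ℝ) (hκ : 0 < κ) :
    ∀ z : ℝ × ℝ × ℝ × ℝ, 0 < z.2.1 → z.2.1 < κ → κ < z.1 →
      pb (fun z => ((z.1 ^ 2 - κ ^ 2) * (z.2.2.1 ^ 2 + α * z.1 / (z.1 ^ 2 - κ ^ 2)))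
              / (z.1 ^ 2 - z.2.1 ^ 2) / 2
            + ((z.2.1 ^ 2 - κ ^ 2) * (z.2.2.2 ^ 2 + α * z.2.1 / (z.2.1 ^ 2 - κ ^ 2)))
              / (z.2.1 ^ 2 - z.1 ^ 2) / 2)
         (fun z => (z.1 ^ 2 - κ ^ 2) * (z.2.1 ^ 2 - κ ^ 2)
            * (z.2.2.1 - z.2.2.2) ^ 2 / (z.1 - z.2.1) ^ 2) z = 0 :=
  stmt_11_general α κ
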